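/- arXiv:2407.11762 — 3 statements merged into one kernel-verified Lean document; each statement's English description precedes it below -/
import Mathlib

section
/- Let U_1, ..., U_{n-1} be i.i.d. uniform random variables on [0,1] and let Sigma = sum of the U_i. Then the CDF of Sigma satisfies F_Sigma(sigma) = (1/(n-1)!) * sum_{tau=0}^{floor(sigma)} (-1)^tau * C(n-1, tau) * (sigma - tau)^{n-1} for sigma in [0, n-1]. -/
open MeasureTheory ProbabilityTheory Finset

/-!
The joint law of the `U i` is the product of uniform laws, so the CDF of a sum of `m + 1` of them
is `∫₀¹ F_m(σ - u) du`, where `F_m = irwinHallCDF m` is the CDF of a sum of `m`. On truncated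
powers `x₊ᵏ` a unit window acts as a backward difference,
`∫₀¹ (c - u)₊ᵏ du = (c₊ᵏ⁺¹ - (c - 1)₊ᵏ⁺¹) / (k + 1)`, so by induction
`F_m(σ) = (1/m!) ∑_τ (-1)^τ C(m, τ) (σ - τ)₊^m`, Pascal's rule absorbing the extra difference.
For `σ ≥ 0` the terms with `τ > σ` vanish, which leaves the sum up to `⌊σ⌋`.
-/

/-- `x₊ᵏ`. For `k = 0` it is the Heaviside step, so that `irwinHallCDF 0` is the CDF of the
empty sum and the induction can start at `m = 0`. -/
noncomputable def truncPow (k : ℕ) (x : ℝ) : ℝ := if 0 ≤ x then x ^ k else 0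

lemma truncPow_nonneg (k : ℕ) (x : ℝ) : 0 ≤ truncPow k x := by
  unfold truncPow
  split_ifs with hx
  · positivity
  · rfl

lemma truncPow_monotone (k : ℕ) : Monotone (truncPow k) := by
  intro x y hxy
  unfold truncPow
  split_ifs with hx hy hy
  · exact pow_le_pow_left₀ hx hxy k
  · exact absurd (hx.trans hxy) hy
  · positivity
  · rfl

lemma integral_from_zero_truncPow (k : ℕ) (b : ℝ) :
    ∫ x in (0 : ℝ)..b, truncPow k x = truncPow (k + 1) b / (k + 1) := by
  rcases le_or_gt 0 b with hb | hb
  · have hpow : Set.EqOn (truncPow k) (· ^ k) (Set.uIcc 0 b) := fun x hx =>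
      if_pos (Set.uIcc_of_le hb ▸ hx).1
    rw [intervalIntegral.integral_congr hpow, integral_pow, truncPow, if_pos hb]
    simp
  · have hzero : ∀ x ∈ Set.Ioo b 0, truncPow k x = 0 := fun x hx => if_neg (not_le.2 hx.2)
    rw [intervalIntegral.integral_symm, intervalIntegral.integral_of_le hb.le,
      integral_Ioc_eq_integral_Ioo, setIntegral_eq_zero_of_forall_eq_zero hzero, truncPow,
      if_neg (not_le.2 hb)]
    simp

lemma integral_truncPow_sub (k : ℕ) (c : ℝ) :
    ∫ u in (0 : ℝ)..1, truncPow k (c - u) =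
      (truncPow (k + 1) c - truncPow (k + 1) (c - 1)) / (k + 1) := by
  have hint (a b : ℝ) : IntervalIntegrable (truncPow k) volume a b :=
    (truncPow_monotone k).intervalIntegrable
  rw [intervalIntegral.integral_comp_sub_left (truncPow k), sub_zero,
    ← intervalIntegral.integral_interval_sub_left (hint 0 c) (hint 0 (c - 1)),
    integral_from_zero_truncPow, integral_from_zero_truncPow, sub_div]

lemma intervalIntegrable_truncPow_sub (k : ℕ) (c a b : ℝ) :
    IntervalIntegrable (fun u => truncPow k (c - u)) volume a b :=
  ((truncPow_monotone k).comp_antitone fun _ _ h => sub_le_sub_left h c).intervalIntegrable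

lemma sum_range_alternating_choose_succ {R : Type*} [CommRing R] (m : ℕ) (A : ℕ → R) :
    ∑ τ ∈ range (m + 2), (-1) ^ τ * ((m + 1).choose τ : R) * A τ =
      ∑ τ ∈ range (m + 1), (-1) ^ τ * (m.choose τ : R) * (A τ - A (τ + 1)) := by
  have hextend : ∑ τ ∈ range (m + 1), (-1) ^ τ * (m.choose τ : R) * A τ =
      ∑ τ ∈ range (m + 2), (-1) ^ τ * (m.choose τ : R) * A τ := by
    simp [sum_range_succ _ (m + 1)]
  simp only [mul_sub, sum_sub_distrib, hextend, sum_range_succ' _ (m + 1),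
    Nat.choose_succ_succ', Nat.cast_add, pow_succ]
  simp only [mul_add, add_mul, sum_add_distrib, mul_neg, mul_one, neg_mul, sum_neg_distrib,
    pow_zero, Nat.choose_zero_right, Nat.cast_one, one_mul]
  ring

noncomputable def irwinHallCDF (m : ℕ) (σ : ℝ) : ℝ :=
  (m.factorial : ℝ)⁻¹ * ∑ τ ∈ range (m + 1), (-1) ^ τ * (m.choose τ : ℝ) * truncPow m (σ - τ)

lemma intervalIntegrable_irwinHallCDF_sub (m : ℕ) (σ a b : ℝ) :
    IntervalIntegrable (fun u => irwinHallCDF m (σ - u)) volume a b := by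
  have hsum := IntervalIntegrable.sum (range (m + 1)) fun τ _ =>
    (intervalIntegrable_truncPow_sub m (σ - τ) a b).const_mul ((-1) ^ τ * (m.choose τ : ℝ))
  simpa only [irwinHallCDF, sum_fn, sub_right_comm σ _ (_ : ℝ)] using hsum.const_mul _

lemma irwinHallCDF_succ (m : ℕ) (σ : ℝ) :
    irwinHallCDF (m + 1) σ = ∫ u in (0 : ℝ)..1, irwinHallCDF m (σ - u) := by
  have hint (τ : ℕ) : IntervalIntegrable
      (fun u => (-1) ^ τ * (m.choose τ : ℝ) * truncPow m (σ - u - τ)) volume 0 1 := by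
    simp_rw [sub_right_comm σ _ (τ : ℝ)]
    exact (intervalIntegrable_truncPow_sub m (σ - τ) 0 1).const_mul _
  have hterm (τ : ℕ) :
      ∫ u in (0 : ℝ)..1, (-1) ^ τ * (m.choose τ : ℝ) * truncPow m (σ - u - τ) =
        (-1) ^ τ * m.choose τ *
          ((truncPow (m + 1) (σ - τ) - truncPow (m + 1) (σ - ↑(τ + 1))) / (m + 1)) := by
    simp_rw [sub_right_comm σ _ (τ : ℝ)]
    rw [intervalIntegral.integral_const_mul, integral_truncPow_sub, Nat.cast_succ, sub_sub]
  unfold irwinHallCDF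
  rw [intervalIntegral.integral_const_mul, intervalIntegral.integral_finsetSum fun τ _ => hint τ,
    sum_congr rfl fun τ _ => hterm τ,
    sum_range_alternating_choose_succ m fun τ => truncPow (m + 1) (σ - τ),
    Nat.factorial_succ, mul_sum, mul_sum]
  refine sum_congr rfl fun τ _ => ?_
  push_cast
  field_simp

lemma irwinHallCDF_nonneg (m : ℕ) (σ : ℝ) : 0 ≤ irwinHallCDF m σ := by
  induction m generalizing σ with
  | zero => simpa [irwinHallCDF] using truncPow_nonneg 0 σ
  | succ m ih =>
    rw [irwinHallCDF_succ]
    exact intervalIntegral.integral_nonneg zero_le_one fun u _ => ih (σ - u)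

lemma irwinHallCDF_eq_sum_range_floor (m : ℕ) {σ : ℝ} (hσ : 0 ≤ σ) :
    irwinHallCDF m σ = (m.factorial : ℝ)⁻¹ *
      ∑ τ ∈ range (⌊σ⌋₊ + 1), (-1) ^ τ * (m.choose τ : ℝ) * (σ - τ) ^ m := by
  set t : ℕ → ℝ := fun τ => (-1) ^ τ * (m.choose τ : ℝ) * truncPow m (σ - τ)
  have ht_choose : ∀ τ ≥ m + 1, t τ = 0 := fun τ hτ => by
    simp [t, Nat.choose_eq_zero_of_lt (Nat.lt_of_succ_le hτ)]
  have ht_floor : ∀ τ ≥ ⌊σ⌋₊ + 1, t τ = 0 := fun τ hτ => by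
    simp [t, truncPow, Nat.lt_of_floor_lt hτ]
  have hpow : ∀ τ ∈ range (⌊σ⌋₊ + 1), t τ = (-1) ^ τ * (m.choose τ : ℝ) * (σ - τ) ^ m :=
    fun τ hτ => by
      have : (τ : ℝ) ≤ σ := (Nat.le_floor_iff hσ).1 (Nat.lt_succ_iff.1 (mem_range.1 hτ))
      simp [t, truncPow, this]
  rw [irwinHallCDF, ← sum_congr rfl hpow,
    ← eventually_constant_sum ht_choose (n := m + 1 + (⌊σ⌋₊ + 1)) (by omega),
    ← eventually_constant_sum ht_floor (n := m + 1 + (⌊σ⌋₊ + 1)) (by omega)]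

lemma measure_pi_sum_le_succ (ν : Measure ℝ) [SigmaFinite ν] (m : ℕ) (σ : ℝ) :
    Measure.pi (fun _ : Fin (m + 1) => ν) {x | ∑ i, x i ≤ σ} =
      ∫⁻ u, Measure.pi (fun _ : Fin m => ν) {x | ∑ i, x i ≤ σ - u} ∂ν := by
  set t : Set (ℝ × (Fin m → ℝ)) := {p | p.1 + ∑ i, p.2 i ≤ σ}
  have ht : MeasurableSet t := measurableSet_le (by fun_prop) measurable_const
  have hpre : MeasurableEquiv.piFinSuccAbove (fun _ => ℝ) 0 ⁻¹' t = {x | ∑ i, x i ≤ σ} := by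
    ext x
    simp [t, Fin.sum_univ_succ, Fin.tail]
  have hsec (u : ℝ) : Prod.mk u ⁻¹' t = {x | ∑ i, x i ≤ σ - u} := by
    ext x
    simp [t, le_sub_iff_add_le']
  rw [← hpre, (measurePreserving_piFinSuccAbove (fun _ => ν) 0).measure_preimage
    ht.nullMeasurableSet, Measure.prod_apply ht]
  simp only [hsec]

lemma measure_pi_uniform_sum_le (m : ℕ) (σ : ℝ) :
    Measure.pi (fun _ : Fin m => volume.restrict (Set.Icc (0 : ℝ) 1)) {x | ∑ i, x i ≤ σ} =
      ENNReal.ofReal (irwinHallCDF m σ) := by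
  induction m generalizing σ with
  | zero =>
    rw [Measure.pi_of_empty]
    by_cases hσ : 0 ≤ σ <;> simp [irwinHallCDF, truncPow, hσ]
  | succ m ih =>
    have hint : IntegrableOn (fun u => irwinHallCDF m (σ - u)) (Set.Icc 0 1) :=
      (intervalIntegrable_iff_integrableOn_Icc_of_le zero_le_one).1
        (intervalIntegrable_irwinHallCDF_sub m σ 0 1)
    rw [measure_pi_sum_le_succ, lintegral_congr fun u => ih (σ - u),
      ← ofReal_integral_eq_lintegral_ofReal hint (ae_of_all _ fun u => irwinHallCDF_nonneg m _),
      irwinHallCDF_succ, intervalIntegral.integral_of_le zero_le_one,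
      integral_Icc_eq_integral_Ioc]

theorem irwin_hall_cdf_general
    {Ω : Type*} [MeasurableSpace Ω] (μ : Measure Ω)
    (n : ℕ) (U : Fin (n - 1) → Ω → ℝ)
    (hmeas : ∀ i, Measurable (U i))
    (hindep : iIndepFun U μ)
    (hunif : ∀ i, Measure.map (U i) μ = volume.restrict (Set.Icc (0 : ℝ) 1))
    (σ : ℝ) (hσ : σ ∈ Set.Icc (0 : ℝ) ((n : ℝ) - 1)) :
    (μ {ω | ∑ i, U i ω ≤ σ}).toReal =
      (1 / (Nat.factorial (n - 1) : ℝ)) *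
        ∑ τ ∈ Finset.range (⌊σ⌋₊ + 1),
          (-1 : ℝ) ^ τ * ((n - 1).choose τ) * (σ - τ) ^ (n - 1) := by
  have hlaw : μ.map (fun ω i => U i ω) = Measure.pi fun _ => volume.restrict (Set.Icc 0 1) := by
    rw [hindep.map_fun_eq_pi_map fun i => (hmeas i).aemeasurable]
    simp only [hunif]
  have hset : MeasurableSet {x : Fin (n - 1) → ℝ | ∑ i, x i ≤ σ} :=
    measurableSet_le (by fun_prop) measurable_const
  rw [show {ω | ∑ i, U i ω ≤ σ} = (fun ω i => U i ω) ⁻¹' {x | ∑ i, x i ≤ σ} from rfl,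
    ← Measure.map_apply (by fun_prop) hset, hlaw, measure_pi_uniform_sum_le,
    ENNReal.toReal_ofReal (irwinHallCDF_nonneg _ _), irwinHallCDF_eq_sum_range_floor _ hσ.1,
    one_div]

/-- **Irwin–Hall distribution.**  If `U 1, …, U (n-1)` are i.i.d. uniform on `[0,1]`
and `Σ = ∑ i, U i`, then for `σ ∈ [0, n-1]`,
`P(Σ ≤ σ) = (1/(n-1)!) ∑_{τ=0}^{⌊σ⌋} (-1)^τ C(n-1, τ) (σ - τ)^(n-1)`. -/
theorem irwin_hall_cdf
    {Ω : Type*} [MeasurableSpace Ω] (μ : Measure Ω) [IsProbabilityMeasure μ]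
    (n : ℕ) (hn : 1 ≤ n) (U : Fin (n - 1) → Ω → ℝ)
    (hmeas : ∀ i, Measurable (U i))
    (hindep : iIndepFun U μ)
    (hunif : ∀ i, Measure.map (U i) μ = volume.restrict (Set.Icc (0 : ℝ) 1))
    (σ : ℝ) (hσ : σ ∈ Set.Icc (0 : ℝ) ((n : ℝ) - 1)) :
    (μ {ω | ∑ i, U i ω ≤ σ}).toReal =
      (1 / (Nat.factorial (n - 1) : ℝ)) *
        ∑ τ ∈ Finset.range (⌊σ⌋₊ + 1),
          (-1 : ℝ) ^ τ * ((n - 1).choose τ) * (σ - τ) ^ (n - 1) :=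
  irwin_hall_cdf_general μ n U hmeas hindep hunif σ hσ
end

section
/- Let A ~ exp(mu) (arrival/first-hitting time) and return times ~ exp(lambda), with a random walk forked at time t_F, terminated at time t_T, and observed at time t > t_T, where t_F < t_T. The CDF of the survival estimate S is: F(x) = 1 if x > exp(-lambda(t - t_T)); F(x) = exp(-mu(t_T - t_F)) if x < exp(-lambda(t - t_F)); and otherwise F(x) = x * (1 - exp(-mu(t - t_F)) * x^{-mu/lambda}) / exp(-lambda(t - t_T)) + exp(-mu(t_T - t_F)). -/
/-!
On the event `A < t_T` the estimate is `max (exp (-λ(t - A))) (exp (-λ(t - t_T + E)))`, so for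
`x > 0` it is at most `x` exactly when `A ≤ a := t + log x / λ` and `E ≥ t_T - a`; on `A ≥ t_T`
it is `0`. Since `E ≥ 0` and `A ≥ t_F` almost surely, the event `S ≤ x` is almost sure for
`x > exp (-λ(t - t_T))` and is `{A ≥ t_T}` for `x < exp (-λ(t - t_F))`. In between, `t_F ≤ a ≤ t_T`
and the independence of `A` and `E` give
`P(S ≤ x) = exp (-μ(t_T - t_F)) + (1 - exp (-μ(a - t_F))) exp (-λ(t_T - a))`,
which is the stated formula once `a` is substituted.
-/

open MeasureTheory ProbabilityTheory Real Set Filter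

namespace ProbabilityTheory

instance nullSingletonClass_expMeasure (r : ℝ) : NullSingletonClass (expMeasure r) :=
  inferInstanceAs (NullSingletonClass (volume.withDensity (gammaPDF 1 r)))

variable {r y : ℝ}

lemma expMeasure_Iio_of_nonpos (hy : y ≤ 0) : expMeasure r (Iio y) = 0 := by
  rw [expMeasure, gammaMeasure, withDensity_apply _ measurableSet_Iio]
  exact lintegral_exponentialPDF_of_nonpos hy

lemma expMeasure_real_Iic (hr : 0 < r) (hy : 0 ≤ y) :
    (expMeasure r).real (Iic y) = 1 - exp (-r * y) := by
  have := isProbabilityMeasure_expMeasure hr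
  rw [← cdf_eq_real, cdf_expMeasure_eq hr, if_pos hy, neg_mul]

lemma expMeasure_real_Ici (hr : 0 < r) (hy : 0 ≤ y) :
    (expMeasure r).real (Ici y) = exp (-r * y) := by
  have := isProbabilityMeasure_expMeasure hr
  rw [← compl_Iio, measureReal_compl measurableSet_Iio, probReal_univ,
    measureReal_congr Iio_ae_eq_Iic, expMeasure_real_Iic hr hy, sub_sub_cancel]

section ExponentialLaw

variable {Ω : Type*} [MeasurableSpace Ω] {μ : Measure Ω} {X Y : Ω → ℝ}

lemma ae_nonneg_of_map_eq_expMeasure (hX : Measurable X) (hlaw : μ.map X = expMeasure r) :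
    ∀ᵐ ω ∂μ, 0 ≤ X ω := by
  have hneg : μ (X ⁻¹' Iio 0) = 0 := by
    rw [← Measure.map_apply hX measurableSet_Iio, hlaw, expMeasure_Iio_of_nonpos le_rfl]
  filter_upwards [measure_eq_zero_iff_ae_notMem.1 hneg] with ω hω
  exact not_lt.1 hω

lemma measure_preimage_singleton_of_map_eq_expMeasure (hX : Measurable X)
    (hlaw : μ.map X = expMeasure r) (y : ℝ) : μ (X ⁻¹' {y}) = 0 := by
  rw [← Measure.map_apply hX (measurableSet_singleton y), hlaw, measure_singleton]

lemma measureReal_preimage_Iic_of_map_eq_expMeasure (hr : 0 < r) (hX : Measurable X)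
    (hlaw : μ.map X = expMeasure r) (hy : 0 ≤ y) :
    μ.real (X ⁻¹' Iic y) = 1 - exp (-r * y) := by
  rw [← map_measureReal_apply hX measurableSet_Iic, hlaw, expMeasure_real_Iic hr hy]

lemma measureReal_preimage_Ici_of_map_eq_expMeasure (hr : 0 < r) (hX : Measurable X)
    (hlaw : μ.map X = expMeasure r) (hy : 0 ≤ y) :
    μ.real (X ⁻¹' Ici y) = exp (-r * y) := by
  rw [← map_measureReal_apply hX measurableSet_Ici, hlaw, expMeasure_real_Ici hr hy]

lemma IndepFun.measureReal_preimage_Ici_union_Iic_inter_Ici [IsFiniteMeasure μ]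
    {mu lam b T : ℝ} (hmu : 0 < mu) (hlam : 0 < lam) (hX : Measurable X) (hY : Measurable Y)
    (hindep : IndepFun X Y μ) (hlawX : μ.map X = expMeasure mu)
    (hlawY : μ.map Y = expMeasure lam) (hb : 0 ≤ b) (hbT : b ≤ T) :
    μ.real (X ⁻¹' Ici T ∪ (X ⁻¹' Iic b ∩ Y ⁻¹' Ici (T - b))) =
      exp (-mu * T) + (1 - exp (-mu * b)) * exp (-lam * (T - b)) := by
  have hdisj : AEDisjoint μ (X ⁻¹' Ici T) (X ⁻¹' Iic b ∩ Y ⁻¹' Ici (T - b)) := by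
    refine measure_mono_null (fun ω ⟨hT, hb', _⟩ => ?_)
      (measure_preimage_singleton_of_map_eq_expMeasure hX hlawX T)
    exact le_antisymm (le_trans hb' hbT) hT
  have hprod : μ.real (X ⁻¹' Iic b ∩ Y ⁻¹' Ici (T - b)) =
      μ.real (X ⁻¹' Iic b) * μ.real (Y ⁻¹' Ici (T - b)) := by
    simp only [measureReal_def,
      hindep.measure_inter_preimage_eq_mul _ _ measurableSet_Iic measurableSet_Ici,
      ENNReal.toReal_mul]
  rw [measureReal_union₀ ((hX measurableSet_Iic).inter (hY measurableSet_Ici)).nullMeasurableSet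
    hdisj, hprod, measureReal_preimage_Ici_of_map_eq_expMeasure hmu hX hlawX (hb.trans hbT),
    measureReal_preimage_Iic_of_map_eq_expMeasure hmu hX hlawX hb,
    measureReal_preimage_Ici_of_map_eq_expMeasure hlam hY hlawY (sub_nonneg.2 hbT)]

end ExponentialLaw

end ProbabilityTheory

/-- For a walk that arrived at time `a < t_T`, let `L` be its last visit before `t_T` and `e` the
time from `t_T` back to the previous return (exponential with rate `λ` by memorylessness). Then
`t_T - L = min e (t_T - a)`, and this is `exp (-λ (t - L))`. -/
noncomputable def survivalEstimate (lam t_T t a e : ℝ) : ℝ :=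
  if a < t_T then max (exp (-lam * (t - a))) (exp (-lam * (t - t_T)) * exp (-lam * e)) else 0

section SurvivalEstimate

variable {lam t_F t_T t a e x : ℝ}

lemma survivalEstimate_of_le (ha : t_T ≤ a) : survivalEstimate lam t_T t a e = 0 :=
  if_neg ha.not_gt

lemma exp_le_survivalEstimate (ha : a < t_T) :
    exp (-lam * (t - a)) ≤ survivalEstimate lam t_T t a e := by
  rw [survivalEstimate, if_pos ha]
  exact le_max_left _ _

lemma survivalEstimate_le (hlam : 0 < lam) (he : 0 ≤ e) :
    survivalEstimate lam t_T t a e ≤ exp (-lam * (t - t_T)) := by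
  unfold survivalEstimate
  split_ifs with ha
  · refine max_le (exp_le_exp.2 (by nlinarith)) ?_
    calc exp (-lam * (t - t_T)) * exp (-lam * e) ≤ exp (-lam * (t - t_T)) * 1 := by
          gcongr
          exact exp_le_one_iff.2 (by nlinarith)
      _ = exp (-lam * (t - t_T)) := mul_one _
  · exact (exp_pos _).le

lemma exp_neg_mul_le_iff (hlam : 0 < lam) (hx : 0 < x) {u : ℝ} :
    exp (-lam * u) ≤ x ↔ -log x / lam ≤ u := by
  rw [← le_log_iff_exp_le hx, neg_mul, neg_le, div_le_iff₀' hlam]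

lemma le_exp_neg_mul_iff (hlam : 0 < lam) (hx : 0 < x) {u : ℝ} :
    x ≤ exp (-lam * u) ↔ u ≤ -log x / lam := by
  rw [← log_le_iff_le_exp hx, neg_mul, le_neg, le_div_iff₀' hlam]

lemma survivalEstimate_le_iff (hlam : 0 < lam) (hx : 0 < x) :
    survivalEstimate lam t_T t a e ≤ x ↔
      t_T ≤ a ∨ (a ≤ t + log x / lam ∧ t_T - (t + log x / lam) ≤ e) := by
  by_cases ha : t_T ≤ a
  · simp only [survivalEstimate_of_le ha, hx.le, ha, true_or]
  · rw [survivalEstimate, if_pos (not_le.1 ha), max_le_iff, ← exp_add, ← mul_add,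
      exp_neg_mul_le_iff hlam hx, exp_neg_mul_le_iff hlam hx]
    simp only [ha, false_or, neg_div]
    constructor <;> rintro ⟨h₁, h₂⟩ <;> constructor <;> linarith

lemma survivalEstimate_le_iff_of_lt (hx₀ : 0 ≤ x) (hx : x < exp (-lam * (t - t_F)))
    (hlam : 0 < lam) (ha : t_F ≤ a) : survivalEstimate lam t_T t a e ≤ x ↔ t_T ≤ a := by
  refine ⟨fun h => ?_, fun h => (survivalEstimate_of_le h).trans_le hx₀⟩
  by_contra! hlt
  exact hx.not_ge <| calc
    exp (-lam * (t - t_F)) ≤ exp (-lam * (t - a)) := exp_le_exp.2 (by nlinarith)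
    _ ≤ survivalEstimate lam t_T t a e := exp_le_survivalEstimate hlt
    _ ≤ x := h

end SurvivalEstimate

section ForkedWalk

variable {Ω : Type*} [MeasurableSpace Ω] {μ : Measure Ω} {mu lam t_F t_T t x : ℝ} {A E : Ω → ℝ}

lemma measureReal_survivalEstimate_le_of_gt [IsProbabilityMeasure μ] (hlam : 0 < lam)
    (hE : ∀ᵐ ω ∂μ, 0 ≤ E ω) (hx : exp (-lam * (t - t_T)) < x) :
    μ.real {ω | survivalEstimate lam t_T t (A ω) (E ω) ≤ x} = 1 := by
  rw [measureReal_congr (eventuallyEq_univ.2 ?_), probReal_univ]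
  filter_upwards [hE] with ω hω
  exact (survivalEstimate_le hlam hω).trans hx.le

lemma measureReal_survivalEstimate_le_of_lt (hmu : 0 < mu) (hlam : 0 < lam) (hFT : t_F ≤ t_T)
    (hA : Measurable A) (hlawA : μ.map (fun ω => A ω - t_F) = expMeasure mu)
    (hx₀ : 0 ≤ x) (hx : x < exp (-lam * (t - t_F))) :
    μ.real {ω | survivalEstimate lam t_T t (A ω) (E ω) ≤ x} = exp (-mu * (t_T - t_F)) := by
  have hA_ge : ∀ᵐ ω ∂μ, t_F ≤ A ω :=
    (ae_nonneg_of_map_eq_expMeasure (hA.sub_const t_F) hlawA).mono fun _ h => sub_nonneg.1 h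
  calc μ.real {ω | survivalEstimate lam t_T t (A ω) (E ω) ≤ x}
      = μ.real ((fun ω => A ω - t_F) ⁻¹' Ici (t_T - t_F)) := by
        refine measureReal_congr (eventuallyEq_set.2 ?_)
        filter_upwards [hA_ge] with ω hω
        simp [survivalEstimate_le_iff_of_lt hx₀ hx hlam hω]
    _ = exp (-mu * (t_T - t_F)) :=
        measureReal_preimage_Ici_of_map_eq_expMeasure hmu (hA.sub_const t_F) hlawA
          (sub_nonneg.2 hFT)

lemma measureReal_survivalEstimate_le_of_mem_Icc [IsFiniteMeasure μ] (hmu : 0 < mu)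
    (hlam : 0 < lam) (hA : Measurable A) (hE : Measurable E) (hindep : IndepFun A E μ)
    (hlawA : μ.map (fun ω => A ω - t_F) = expMeasure mu) (hlawE : μ.map E = expMeasure lam)
    (hx₁ : exp (-lam * (t - t_F)) ≤ x) (hx₂ : x ≤ exp (-lam * (t - t_T))) :
    μ.real {ω | survivalEstimate lam t_T t (A ω) (E ω) ≤ x} =
      x * (1 - exp (-mu * (t - t_F)) * x ^ (-(mu / lam))) / exp (-lam * (t - t_T))
        + exp (-mu * (t_T - t_F)) := by
  have hx : 0 < x := (exp_pos _).trans_le hx₁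
  set a := t + log x / lam with ha
  have hFa : t_F ≤ a := by
    have := (exp_neg_mul_le_iff hlam hx).1 hx₁
    rw [neg_div] at this
    linarith
  have haT : a ≤ t_T := by
    have := (le_exp_neg_mul_iff hlam hx).1 hx₂
    rw [neg_div] at this
    linarith
  have hset : {ω | survivalEstimate lam t_T t (A ω) (E ω) ≤ x} =
      (fun ω => A ω - t_F) ⁻¹' Ici (t_T - t_F) ∪
        ((fun ω => A ω - t_F) ⁻¹' Iic (a - t_F) ∩ E ⁻¹' Ici (t_T - t_F - (a - t_F))) := by
    ext ω
    simp [survivalEstimate_le_iff hlam hx, ← ha]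
  have hexpE : exp (-lam * (t_T - t_F - (a - t_F))) = x / exp (-lam * (t - t_T)) := by
    rw [eq_div_iff (exp_pos _).ne', ← exp_add, ← exp_log hx]
    congr 1
    rw [ha]
    field_simp
    ring
  have hexpA : exp (-mu * (a - t_F)) = exp (-mu * (t - t_F)) * x ^ (-(mu / lam)) := by
    rw [rpow_def_of_pos hx, ← exp_add]
    congr 1
    rw [ha]
    field_simp
    ring
  rw [hset, IndepFun.measureReal_preimage_Ici_union_Iic_inter_Ici hmu hlam (hA.sub_const t_F) hE
    (hindep.comp (measurable_id.sub_const t_F) measurable_id) hlawA hlawE (sub_nonneg.2 hFa)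
    (sub_le_sub_right haT t_F), hexpE, hexpA]
  ring

end ForkedWalk

theorem forked_terminated_survival_cdf_general
    {Ω : Type*} [MeasurableSpace Ω] (μP : Measure Ω) [IsProbabilityMeasure μP]
    (mu lam t_F t_T t : ℝ) (hmu : 0 < mu) (hlam : 0 < lam)
    (hFT : t_F < t_T)
    (A E : Ω → ℝ) (hA : Measurable A) (hE : Measurable E)
    (hindep : IndepFun A E μP)
    (hlawA : Measure.map (fun ω => A ω - t_F) μP = expMeasure mu)
    (hlawE : Measure.map E μP = expMeasure lam)
    (S : Ω → ℝ)
    (hS : S = fun ω => if A ω < t_T then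
        max (exp (-lam * (t - A ω))) (exp (-lam * (t - t_T)) * exp (-lam * E ω))
      else 0)
    (x : ℝ) (hx : 0 ≤ x) :
    (μP {ω | S ω ≤ x}).toReal =
      if exp (-lam * (t - t_T)) < x then 1
      else if x < exp (-lam * (t - t_F)) then exp (-mu * (t_T - t_F))
      else x * (1 - exp (-mu * (t - t_F)) * x ^ (-(mu / lam)) ) / exp (-lam * (t - t_T))
        + exp (-mu * (t_T - t_F)) := by
  change μP.real {ω | S ω ≤ x} = _
  rw [show S = fun ω => survivalEstimate lam t_T t (A ω) (E ω) from hS]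
  split_ifs with hc hF
  · exact measureReal_survivalEstimate_le_of_gt hlam (ae_nonneg_of_map_eq_expMeasure hE hlawE) hc
  · exact measureReal_survivalEstimate_le_of_lt hmu hlam hFT.le hA hlawA hx hF
  · exact measureReal_survivalEstimate_le_of_mem_Icc hmu hlam hA hE hindep hlawA hlawE
      (not_lt.1 hF) (not_lt.1 hc)

/-- **CDF of the survival estimate of a forked-and-terminated random walk.**
A walk is forked at time `t_F`; its first arrival time at the observing node is
`A = t_F + (exponential with rate μ)`; after arrival, return times are i.i.d.
exponential with rate `λ`; the walk is terminated at `t_T` and observed at `t > t_T`.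
By memorylessness, the survival estimate at time `t` is
`S = max (exp (-λ(t - A))) (exp (-λ(t - t_T)) * exp (-λ E))` if the walk arrived
before termination (`A < t_T`, where `E ~ exp(λ)` is the residual return time), and
`S = 0` otherwise (the node never saw the walk).  Its CDF is
`F(x) = 1` for `x > exp (-λ(t - t_T))`, `F(x) = exp (-μ(t_T - t_F))` for
`x < exp (-λ(t - t_F))`, and otherwise
`F(x) = x (1 - exp (-μ(t - t_F)) x^(-μ/λ)) / exp (-λ(t - t_T)) + exp (-μ(t_T - t_F))`. -/
theorem forked_terminated_survival_cdf
    {Ω : Type*} [MeasurableSpace Ω] (μP : Measure Ω) [IsProbabilityMeasure μP]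
    (mu lam t_F t_T t : ℝ) (hmu : 0 < mu) (hlam : 0 < lam)
    (hFT : t_F < t_T) (hTt : t_T < t)
    (A E : Ω → ℝ) (hA : Measurable A) (hE : Measurable E)
    (hindep : IndepFun A E μP)
    (hlawA : Measure.map (fun ω => A ω - t_F) μP = expMeasure mu)
    (hlawE : Measure.map E μP = expMeasure lam)
    (S : Ω → ℝ)
    (hS : S = fun ω => if A ω < t_T then
        max (exp (-lam * (t - A ω))) (exp (-lam * (t - t_T)) * exp (-lam * E ω))
      else 0)
    (x : ℝ) (hx : 0 ≤ x) :
    (μP {ω | S ω ≤ x}).toReal =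
      if exp (-lam * (t - t_T)) < x then 1
      else if x < exp (-lam * (t - t_F)) then exp (-mu * (t_T - t_F))
      else x * (1 - exp (-mu * (t - t_F)) * x ^ (-(mu / lam)) ) / exp (-lam * (t - t_T))
        + exp (-mu * (t_T - t_F)) :=
  forked_terminated_survival_cdf_general μP mu lam t_F t_T t hmu hlam hFT A E hA hE hindep hlawA
    hlawE S hS x hx
end

section
/- With arrival rate mu, return rate lambda (mu != 2*lambda), fork time t_F, termination time t_T, and observation time t > t_T, the expectation of the survival estimate S is E[S] = exp(-mu(t_T - t_F)) * exp(-lambda(t - t_T)) * (1/(2 - mu/lambda) - 1) + exp(-lambda(t - t_T))/2 + exp(-2*lambda(t - t_F)) * exp(lambda(t - t_T)) * (1/2 - 1/(2 - mu/lambda)). -/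
/-!
With `X = A - t_F ~ Exp(mu)`, `Y = E ~ Exp(lam)` and `T = t_T - t_F`, the estimate factors as
`S = e^{-lam (t - t_T)} 1{X < T} e^{-lam min (T - X) Y}`. Independence turns `E[S]` into an iterated
integral against `Exp(mu) ⊗ Exp(lam)`. Splitting the inner integral at `y = s` gives
`E[e^{-lam min s Y}] = (1 + e^{-2 lam s}) / 2` for `s ≥ 0`; the outer integral over `x < T` is
then elementary, with `2 lam - mu` in the denominator.
-/

open MeasureTheory ProbabilityTheory Real Set

lemma integral_exp_mul {c : ℝ} (hc : c ≠ 0) (a b : ℝ) :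
    ∫ x in a..b, exp (c * x) = (exp (c * b) - exp (c * a)) / c := by
  rw [intervalIntegral.integral_comp_mul_left (fun x => exp x) hc, integral_exp, smul_eq_mul,
    inv_mul_eq_div]

lemma max_exp_neg_mul_eq_mul_exp_neg_mul_min {lam : ℝ} (hlam : 0 ≤ lam) (d u v : ℝ) :
    max (exp (-lam * (d + u))) (exp (-lam * d) * exp (-lam * v))
      = exp (-lam * d) * exp (-lam * min u v) := by
  rw [← exp_add, ← exp_add, ← exp_monotone.map_max]
  congr 1
  rcases le_total u v with huv | hvu
  · rw [min_eq_left huv, max_eq_left (by nlinarith)]; ring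
  · rw [min_eq_right hvu, max_eq_right (by nlinarith)]

namespace ProbabilityTheory

lemma IndepFun.integral_comp_eq_integral_prod {Ω α β E : Type*} [MeasurableSpace Ω]
    [MeasurableSpace α] [MeasurableSpace β] [NormedAddCommGroup E] [NormedSpace ℝ E]
    {μ : Measure Ω} [IsFiniteMeasure μ] {X : Ω → α} {Y : Ω → β} (hXY : IndepFun X Y μ)
    (hX : AEMeasurable X μ) (hY : AEMeasurable Y μ) {f : α × β → E}
    (hf : AEStronglyMeasurable f ((μ.map X).prod (μ.map Y))) :
    ∫ ω, f (X ω, Y ω) ∂μ = ∫ p, f p ∂(μ.map X).prod (μ.map Y) := by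
  rw [← hXY.map_prod_eq_prod_map_map hX hY] at hf ⊢
  exact (integral_map (hX.prodMk hY) hf).symm

lemma integral_expMeasure_eq_integral_Ioi {r : ℝ} (hr : 0 ≤ r) (g : ℝ → ℝ) :
    ∫ x, g x ∂expMeasure r = ∫ x in Ioi 0, r * exp (-(r * x)) * g x := by
  have hpdf : ∀ x, (exponentialPDF r x).toReal • g x
      = (Ici 0).indicator (fun x => r * exp (-(r * x)) * g x) x := by
    intro x
    have : 0 ≤ r * exp (-(r * x)) := by positivity
    rw [exponentialPDF_eq, ENNReal.toReal_ofReal']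
    by_cases hx : 0 ≤ x <;> simp [hx, this]
  change ∫ x, g x ∂volume.withDensity (exponentialPDF r) = _
  rw [integral_withDensity_eq_integral_toReal_smul (f := exponentialPDF r)
      (measurable_exponentialPDFReal r).ennreal_ofReal
      (.of_forall fun _ => ENNReal.ofReal_lt_top)]
  simp_rw [hpdf]
  rw [integral_indicator measurableSet_Ici, integral_Ici_eq_integral_Ioi]

lemma ae_nonneg_expMeasure (r : ℝ) : ∀ᵐ x ∂expMeasure r, 0 ≤ x := by
  simp_rw [ae_iff, not_le]
  change volume.withDensity (exponentialPDF r) (Iio 0) = 0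
  rw [withDensity_apply _ measurableSet_Iio]
  exact lintegral_exponentialPDF_of_nonpos le_rfl

lemma integral_exp_neg_min_expMeasure {r s : ℝ} (hr : 0 < r) (hs : 0 ≤ s) :
    ∫ y, exp (-r * min s y) ∂expMeasure r = (1 + exp (-2 * r * s)) / 2 := by
  set f := fun y => r * exp (-(r * y)) * exp (-r * min s y)
  have hbefore : EqOn f (fun y => r * exp (-2 * r * y)) (Ioc 0 s) := fun y hy => by
    simp only [f, min_eq_right hy.2, mul_assoc r, ← exp_add]
    ring_nf
  have hafter : EqOn f (fun y => r * exp (-r * s) * exp (-r * y)) (Ioi s) := fun y hy => by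
    simp only [f, min_eq_left (le_of_lt (mem_Ioi.1 hy))]
    ring_nf
  have hint : IntegrableOn f (Ioi s) := by
    refine IntegrableOn.congr_fun ?_ hafter.symm measurableSet_Ioi
    exact (exp_neg_integrableOn_Ioi s hr).const_mul _
  rw [integral_expMeasure_eq_integral_Ioi hr.le, ← Ioc_union_Ioi_eq_Ioi hs,
    setIntegral_union Ioc_disjoint_Ioi_same measurableSet_Ioi
      (Continuous.integrableOn_Ioc (by fun_prop)) hint,
    setIntegral_congr_fun measurableSet_Ioc hbefore, setIntegral_congr_fun measurableSet_Ioi hafter,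
    integral_const_mul, integral_const_mul, ← intervalIntegral.integral_of_le hs,
    integral_exp_mul (by positivity), integral_exp_mul_Ioi (by linarith)]
  have hsq : exp (-r * s) * exp (-r * s) = exp (-2 * r * s) := by rw [← exp_add]; ring_nf
  rw [mul_zero, exp_zero, ← hsq]
  field_simp
  ring

lemma integral_ite_lt_exp_expMeasure {r c T : ℝ} (hr : 0 ≤ r) (hc : c ≠ r) (hT : 0 ≤ T) :
    ∫ x, (if x < T then exp (-c * (T - x)) else 0) ∂expMeasure r
      = r * (exp (-r * T) - exp (-c * T)) / (c - r) := by
  have hind : ∀ x, r * exp (-(r * x)) * (if x < T then exp (-c * (T - x)) else 0)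
      = (Iio T).indicator (fun x => r * exp (-c * T) * exp ((c - r) * x)) x := by
    intro x
    by_cases hx : x < T
    · simp only [hx, if_true, indicator_of_mem (mem_Iio.2 hx), mul_assoc, ← exp_add]
      ring_nf
    · simp [hx]
  simp_rw [integral_expMeasure_eq_integral_Ioi hr, hind]
  rw [setIntegral_indicator measurableSet_Iio, Ioi_inter_Iio, ← integral_Ioc_eq_integral_Ioo,
    ← intervalIntegral.integral_of_le hT, intervalIntegral.integral_const_mul,
    integral_exp_mul (sub_ne_zero.2 hc), mul_zero, exp_zero]
  have hsplit : exp (-c * T) * exp ((c - r) * T) = exp (-r * T) := by rw [← exp_add]; ring_nf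
  rw [← hsplit]
  ring

lemma integrable_ite_lt_exp_expMeasure {r c : ℝ} (hr : 0 < r) (hc : 0 ≤ c) (T : ℝ) :
    Integrable (fun x => if x < T then exp (-c * (T - x)) else 0) (expMeasure r) := by
  have := isProbabilityMeasure_expMeasure hr
  refine .of_bound
    (Measurable.ite measurableSet_Iio (by fun_prop) measurable_const).aestronglyMeasurable 1
    (.of_forall fun x => ?_)
  split_ifs with hx
  · rw [norm_of_nonneg (exp_pos _).le, exp_le_one_iff]
    nlinarith
  · simp

/-- `S = exp (-lam * (t - t_T)) * forkedSurvivalWeight lam (t_T - t_F) (A - t_F, E)`. -/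
noncomputable def forkedSurvivalWeight (lam T : ℝ) (p : ℝ × ℝ) : ℝ :=
  if p.1 < T then exp (-lam * min (T - p.1) p.2) else 0

lemma measurable_forkedSurvivalWeight (lam T : ℝ) : Measurable (forkedSurvivalWeight lam T) :=
  Measurable.ite (measurableSet_lt measurable_fst measurable_const) (by fun_prop) measurable_const

lemma integral_forkedSurvivalWeight_prod_expMeasure {mu lam T : ℝ} (hmu : 0 < mu)
    (hlam : 0 < lam) (hne : mu ≠ 2 * lam) (hT : 0 ≤ T) :
    ∫ p, forkedSurvivalWeight lam T p ∂(expMeasure mu).prod (expMeasure lam)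
      = (1 - exp (-mu * T)) / 2
        + mu * (exp (-mu * T) - exp (-2 * lam * T)) / (2 * (2 * lam - mu)) := by
  have := isProbabilityMeasure_expMeasure hmu
  have := isProbabilityMeasure_expMeasure hlam
  have hint : Integrable (forkedSurvivalWeight lam T) ((expMeasure mu).prod (expMeasure lam)) := by
    refine .of_bound (measurable_forkedSurvivalWeight lam T).aestronglyMeasurable 1 ?_
    filter_upwards [Measure.quasiMeasurePreserving_snd.ae (ae_nonneg_expMeasure lam)] with p hp
    rw [forkedSurvivalWeight]
    split_ifs with hx
    · rw [norm_of_nonneg (exp_pos _).le, exp_le_one_iff]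
      nlinarith [le_min (sub_nonneg.2 hx.le) hp]
    · simp
  -- the `c = 0` instance of `integral_ite_lt_exp_expMeasure` is the distribution function at `T`
  have hinner : ∀ x, ∫ y, forkedSurvivalWeight lam T (x, y) ∂expMeasure lam
      = ((if x < T then exp (-0 * (T - x)) else 0)
          + (if x < T then exp (-(2 * lam) * (T - x)) else 0)) / 2 := by
    intro x
    simp only [forkedSurvivalWeight]
    split_ifs with hx
    · rw [integral_exp_neg_min_expMeasure hlam (sub_nonneg.2 hx.le), neg_zero, zero_mul, exp_zero]
      ring_nf
    · simp
  rw [integral_prod _ hint]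
  simp_rw [hinner]
  rw [integral_div, integral_add (integrable_ite_lt_exp_expMeasure hmu le_rfl T)
      (integrable_ite_lt_exp_expMeasure hmu (by positivity) T),
    integral_ite_lt_exp_expMeasure hmu.le hmu.ne hT,
    integral_ite_lt_exp_expMeasure hmu.le (Ne.symm hne) hT, neg_zero, zero_mul, exp_zero]
  have h2 : 2 * lam - mu ≠ 0 := sub_ne_zero.2 (Ne.symm hne)
  field_simp [hmu.ne']
  ring

end ProbabilityTheory

theorem forked_terminated_survival_expectation_general
    {Ω : Type*} [MeasurableSpace Ω] (μP : Measure Ω) [IsProbabilityMeasure μP]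
    (mu lam t_F t_T t : ℝ) (hmu : 0 < mu) (hlam : 0 < lam) (hne : mu ≠ 2 * lam)
    (hFT : t_F < t_T)
    (A E : Ω → ℝ) (hA : Measurable A) (hE : Measurable E)
    (hindep : IndepFun A E μP)
    (hlawA : Measure.map (fun ω => A ω - t_F) μP = expMeasure mu)
    (hlawE : Measure.map E μP = expMeasure lam)
    (S : Ω → ℝ)
    (hS : S = fun ω => if A ω < t_T then
        max (exp (-lam * (t - A ω))) (exp (-lam * (t - t_T)) * exp (-lam * E ω))
      else 0) :
    ∫ ω, S ω ∂μP =
      exp (-mu * (t_T - t_F)) * exp (-lam * (t - t_T)) * (1 / (2 - mu / lam) - 1)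
        + exp (-lam * (t - t_T)) / 2
        + exp (-2 * lam * (t - t_F)) * exp (lam * (t - t_T))
            * (1 / 2 - 1 / (2 - mu / lam)) := by
  set T := t_T - t_F
  have hT : 0 ≤ T := sub_nonneg.2 hFT.le
  have hindep' : IndepFun (fun ω => A ω - t_F) E μP :=
    hindep.comp (φ := fun a => a - t_F) (ψ := id) (by fun_prop) measurable_id
  have hS' : ∀ ω,
      S ω = exp (-lam * (t - t_T)) * forkedSurvivalWeight lam T (A ω - t_F, E ω) := by
    intro ω
    simp only [hS, forkedSurvivalWeight, T, sub_lt_sub_iff_right, sub_sub_sub_cancel_right]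
    split_ifs
    · rw [← max_exp_neg_mul_eq_mul_exp_neg_mul_min hlam.le, sub_add_sub_cancel]
    · rw [mul_zero]
  have hexp : exp (-2 * lam * (t - t_F)) * exp (lam * (t - t_T))
      = exp (-lam * (t - t_T)) * exp (-2 * lam * T) := by
    simp only [← exp_add, T]; ring_nf
  simp_rw [hS']
  rw [integral_const_mul, hindep'.integral_comp_eq_integral_prod (by fun_prop) hE.aemeasurable
      (by rw [hlawA, hlawE]; exact (measurable_forkedSurvivalWeight lam T).aestronglyMeasurable),
    hlawA, hlawE, integral_forkedSurvivalWeight_prod_expMeasure hmu hlam hne hT, hexp]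
  clear_value T
  have h2 : lam * 2 - mu ≠ 0 := by contrapose! hne; linarith
  field_simp
  ring

/-- **Expected survival estimate of a forked-and-terminated random walk.**
Same model as the CDF lemma: fork at `t_F`, first arrival time `A - t_F ~ exp(μ)`,
residual return time `E ~ exp(λ)`, termination at `t_T`, observation at `t > t_T`,
`μ ≠ 2λ`.  Then
`E[S] = exp(-μ(t_T-t_F)) exp(-λ(t-t_T)) (1/(2-μ/λ) - 1) + exp(-λ(t-t_T))/2
        + exp(-2λ(t-t_F)) exp(λ(t-t_T)) (1/2 - 1/(2-μ/λ))`. -/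
theorem forked_terminated_survival_expectation
    {Ω : Type*} [MeasurableSpace Ω] (μP : Measure Ω) [IsProbabilityMeasure μP]
    (mu lam t_F t_T t : ℝ) (hmu : 0 < mu) (hlam : 0 < lam) (hne : mu ≠ 2 * lam)
    (hFT : t_F < t_T) (hTt : t_T < t)
    (A E : Ω → ℝ) (hA : Measurable A) (hE : Measurable E)
    (hindep : IndepFun A E μP)
    (hlawA : Measure.map (fun ω => A ω - t_F) μP = expMeasure mu)
    (hlawE : Measure.map E μP = expMeasure lam)
    (S : Ω → ℝ)
    (hS : S = fun ω => if A ω < t_T then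
        max (exp (-lam * (t - A ω))) (exp (-lam * (t - t_T)) * exp (-lam * E ω))
      else 0) :
    ∫ ω, S ω ∂μP =
      exp (-mu * (t_T - t_F)) * exp (-lam * (t - t_T)) * (1 / (2 - mu / lam) - 1)
        + exp (-lam * (t - t_T)) / 2
        + exp (-2 * lam * (t - t_F)) * exp (lam * (t - t_T))
            * (1 / 2 - 1 / (2 - mu / lam)) :=
  forked_terminated_survival_expectation_general μP mu lam t_F t_T t hmu hlam hne hFT A E hA hE
    hindep hlawA hlawE S hS
end
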